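/- For n ≥ 0, T_n^{(r,k)}(x|λ) = Σ_{m=0}^{n} [Σ_{l=0}^{n-m} C(n,l+m) S₂(l+m,m) T_{n-m-l}^{(r,k)}(λ)] (x)_m, where (x)_m = x(x-1)···(x-m+1) is the falling factorial. -/

import Mathlib

/-!
Putting `x = 0` in the generating function and cancelling the nonzero series `1 - e^{-t}` gives
`Σ T_n(x) tⁿ/n! = e^{xt} · Σ T_n(0) tⁿ/n!`, i.e. `T_n(x) = Σ_p C(n,p) T_{n-p}(0) xᵖ`.
Expanding `xᵖ = Σ_m S₂(p,m) (x)_m` and collecting the coefficient of `(x)_m` gives the formula.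
The coefficient-defined `S2` agrees with `Nat.stirlingSecond` because
`D (e^t - 1)^{m+1} = (m+1) ((e^t - 1)^{m+1} + (e^t - 1)^m)` is, coefficientwise, the Stirling
recurrence.
-/

open PowerSeries Finset

/-- e^{xt} as a formal power series. -/
noncomputable def expX (x : ℂ) : PowerSeries ℂ := rescale x (exp ℂ)

/-- 1 - e^{-t} as a formal power series. -/
noncomputable def oneSubExpNeg : PowerSeries ℂ := 1 - rescale (-1) (exp ℂ)

/-- Li_k(1-e^{-t}) = Σ_{m≥1} (1-e^{-t})^m / m^k as a formal power series. -/
noncomputable def polyLogC (k : ℤ) : PowerSeries ℂ :=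
  mk fun n => ∑ m ∈ Finset.Icc 1 n, (coeff n (oneSubExpNeg ^ m)) * ((m : ℂ) ^ k)⁻¹

/-- integer power of a power series (inverse via `PowerSeries.inv`). -/
noncomputable def zpowS (f : PowerSeries ℂ) (r : ℤ) : PowerSeries ℂ :=
  f ^ r.toNat * (f⁻¹) ^ (-r).toNat

/-- (1-λ)/(e^t-λ). -/
noncomputable def feBase (l : ℂ) : PowerSeries ℂ :=
  C (1 - l) * (exp ℂ - C l)⁻¹

/-- exponential generating function Σ f(n) t^n/n!. -/
noncomputable def GF (f : ℕ → ℂ) : PowerSeries ℂ := mk fun n => f n / n.factorial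

/-- Stirling numbers of the second kind: (e^t-1)^m = m! Σ_l S2(l,m) t^l/l!. -/
noncomputable def S2 (n m : ℕ) : ℂ :=
  (n.factorial : ℂ) / (m.factorial : ℂ) * coeff n ((exp ℂ - 1) ^ m)

open Nat

section Stirling

variable {A : Type*} [CommRing A] [Algebra ℚ A]

theorem derivative_exp_sub_one_pow (m : ℕ) :
    d⁄dX A ((exp A - 1) ^ (m + 1)) = (m + 1) • ((exp A - 1) ^ (m + 1) + (exp A - 1) ^ m) := by
  rw [derivative_pow, map_sub, derivative_exp, derivative_one, sub_zero, nsmul_eq_mul]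
  push_cast
  ring

theorem factorial_mul_coeff_exp_sub_one_pow (n m : ℕ) :
    (n ! : A) * coeff n ((exp A - 1) ^ m) = m ! * stirlingSecond n m := by
  induction n generalizing m with
  | zero => cases m <;> simp
  | succ n ih =>
    cases m with
    | zero => simp [coeff_one]
    | succ m =>
      have hrec := congrArg (coeff n) (derivative_exp_sub_one_pow (A := A) m)
      rw [coeff_derivative, map_nsmul, map_add, nsmul_eq_mul] at hrec
      have hm₁ := ih (m + 1)
      rw [factorial_succ m] at hm₁
      rw [stirlingSecond_succ_succ, factorial_succ n, factorial_succ m]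
      push_cast at hrec hm₁ ⊢
      linear_combination (n ! : A) * hrec + (m + 1 : A) * (hm₁ + ih m)

end Stirling

theorem S2_eq_stirlingSecond (n m : ℕ) : S2 n m = stirlingSecond n m := by
  rw [S2, div_mul_eq_mul_div, factorial_mul_coeff_exp_sub_one_pow, mul_div_cancel_left₀]
  exact_mod_cast m.factorial_ne_zero

section FallingFactorial

variable {R : Type*} [CommRing R]

theorem pow_eq_sum_stirlingSecond_mul_descPochhammer (n : ℕ) (x : R) :
    x ^ n = ∑ m ∈ range (n + 1), (stirlingSecond n m : R) * (descPochhammer R m).eval x := by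
  induction n with
  | zero => simp
  | succ n ih =>
    set P : ℕ → R := fun m => (descPochhammer R m).eval x
    have hP (m : ℕ) : x * P m = P (m + 1) + m * P m := by
      simp only [P, descPochhammer_succ_eval]
      ring
    have hshift : ∑ m ∈ range (n + 1), (m : R) * stirlingSecond n m * P m =
        ∑ m ∈ range (n + 1), (m + 1 : R) * stirlingSecond n (m + 1) * P (m + 1) := by
      rw [sum_range_succ', sum_range_succ, stirlingSecond_eq_zero_of_lt n.lt_succ_self]
      simp
    calc x ^ (n + 1) = ∑ m ∈ range (n + 1), (stirlingSecond n m : R) * (x * P m) := by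
          rw [pow_succ, ih, sum_mul]
          exact sum_congr rfl fun m _ => by ring
      _ = ∑ m ∈ range (n + 1), (stirlingSecond n m : R) * P (m + 1) +
            ∑ m ∈ range (n + 1), (m : R) * stirlingSecond n m * P m := by
          simp only [hP, ← sum_add_distrib]
          exact sum_congr rfl fun m _ => by ring
      _ = ∑ m ∈ range (n + 2), (stirlingSecond (n + 1) m : R) * P m := by
          rw [hshift, ← sum_add_distrib, sum_range_succ' _ (n + 1)]
          push_cast [stirlingSecond_succ_succ, stirlingSecond_succ_zero, zero_mul, add_zero]
          exact sum_congr rfl fun m _ => by ring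

theorem sum_choose_mul_pow_eq_sum_descPochhammer (a : ℕ → R) (n : ℕ) (x : R) :
    ∑ p ∈ range (n + 1), (n.choose p : R) * a (n - p) * x ^ p =
      ∑ m ∈ range (n + 1),
        (∑ l ∈ range (n - m + 1),
            (n.choose (l + m) : R) * stirlingSecond (l + m) m * a (n - m - l)) *
          (descPochhammer R m).eval x := by
  calc ∑ p ∈ range (n + 1), (n.choose p : R) * a (n - p) * x ^ p
      = ∑ p ∈ range (n + 1), ∑ m ∈ range (p + 1),
          (n.choose p : R) * stirlingSecond p m * a (n - p) * (descPochhammer R m).eval x := by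
        refine sum_congr rfl fun p _ => ?_
        rw [pow_eq_sum_stirlingSecond_mul_descPochhammer, mul_sum]
        exact sum_congr rfl fun m _ => by ring
    _ = ∑ m ∈ range (n + 1), ∑ p ∈ Ico m (n + 1),
          (n.choose p : R) * stirlingSecond p m * a (n - p) * (descPochhammer R m).eval x := by
        refine sum_comm' fun p m => ?_
        simp only [mem_range, mem_Ico]
        omega
    _ = _ := by
        refine sum_congr rfl fun m hm => ?_
        rw [sum_Ico_eq_sum_range, sum_mul, show n + 1 - m = n - m + 1 by grind]
        refine sum_congr rfl fun l _ => ?_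
        rw [add_comm m l, Nat.sub_sub, add_comm m l]

end FallingFactorial

theorem expX_zero : expX 0 = 1 := by
  simp [expX, rescale_zero]

theorem oneSubExpNeg_ne_zero : oneSubExpNeg ≠ 0 := by
  intro h
  have h₁ := congrArg (coeff 1) h
  simp [oneSubExpNeg, coeff_rescale, coeff_exp] at h₁

theorem GF_injective : Function.Injective GF := by
  intro f g h
  funext n
  have hn := congrArg (coeff n) h
  simp only [GF, coeff_mk] at hn
  exact (div_left_inj' (by exact_mod_cast n.factorial_ne_zero)).mp hn

theorem expX_mul_GF (x : ℂ) (g : ℕ → ℂ) :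
    expX x * GF g = GF fun n => ∑ p ∈ range (n + 1), (n.choose p : ℂ) * g (n - p) * x ^ p := by
  ext n
  rw [coeff_mul,
    Nat.sum_antidiagonal_eq_sum_range_succ (fun p q => coeff p (expX x) * coeff q (GF g)),
    GF, GF, coeff_mk, sum_div]
  refine sum_congr rfl fun p hp => ?_
  have hpn : p ≤ n := mem_range_succ_iff.mp hp
  simp only [expX, coeff_rescale, coeff_exp, coeff_mk, Nat.cast_choose ℂ hpn, map_div₀, map_one,
    map_natCast]
  field_simp [Nat.factorial_ne_zero]

theorem stmt13_general (lam : ℂ) (r k : ℤ) (T : ℕ → ℂ → ℂ)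
    (hT : ∀ x : ℂ, oneSubExpNeg * GF (fun n => T n x)
        = zpowS (feBase lam) (r) * polyLogC (k) * expX x) :
    ∀ (n : ℕ) (x : ℂ),
      T n x = ∑ m ∈ range (n + 1),
        (∑ l ∈ range (n - m + 1), (n.choose (l + m) : ℂ) * S2 (l + m) m * T (n - m - l) 0) *
        ∏ i ∈ range m, (x - i) := by
  intro n x
  have hGF : GF (fun n => T n x) = expX x * GF (fun n => T n 0) := by
    refine mul_left_cancel₀ oneSubExpNeg_ne_zero ?_
    rw [hT x, mul_left_comm, hT 0, expX_zero, mul_one, mul_comm]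
  rw [expX_mul_GF] at hGF
  simp only [congrFun (GF_injective hGF) n, S2_eq_stirlingSecond,
    ← descPochhammer_eval_eq_prod_range]
  exact sum_choose_mul_pow_eq_sum_descPochhammer (T · 0) n x

theorem stmt13 (lam : ℂ) (hlam : lam ≠ 1) (r k : ℤ) (T : ℕ → ℂ → ℂ)
    (hT : ∀ x : ℂ, oneSubExpNeg * GF (fun n => T n x)
        = zpowS (feBase lam) (r) * polyLogC (k) * expX x) :
    ∀ (n : ℕ) (x : ℂ),
      T n x = ∑ m ∈ range (n + 1),
        (∑ l ∈ range (n - m + 1), (n.choose (l + m) : ℂ) * S2 (l + m) m * T (n - m - l) 0) *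
        ∏ i ∈ range m, (x - i) :=
  stmt13_general lam r k T hT
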